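/- arXiv:2404.12481 — 5 statements merged into one kernel-verified Lean document; each statement's English description precedes it below -/
import Mathlib

section
/- Let Γ be symmetric positive definite and Σ symmetric positive semidefinite of rank h with smallest nonzero eigenvalue η_min⁺. Then the smallest nonzero eigenvalue of Γ^{−1/2} Σ Γ^{−1/2} is at least η_min⁺ · ‖Γ‖_op⁻¹. -/
open Matrix
open scoped Matrix.Norms.L2Operator

/-!
Let `v` be a unit eigenvector of `R Σ R` for an eigenvalue `μ ≠ 0` and put `w = R v`. Then
`μ = wᵀ Σ w ≥ 0` and `μ² = ‖R Σ w‖² = (Σ w)ᵀ Γ⁻¹ (Σ w)`. Expanding quadratic forms in an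
eigenbasis, `η ≤ λ` for the nonzero eigenvalues `λ` of `Σ` gives `η · wᵀ Σ w ≤ ‖Σ w‖²`, and
`0 ≤ λ ≤ ‖Γ‖` for the eigenvalues of `Γ` gives `‖y‖² ≤ ‖Γ‖ · yᵀ Γ⁻¹ y`. Together
`η μ ≤ ‖Γ‖ μ²`, and we divide by `μ > 0`.
-/

section
variable {n : Type*} [Fintype n] {A : Matrix n n ℝ}

lemma Matrix.IsHermitian.dotProduct_mulVec_comm (hA : A.IsHermitian) (x y : n → ℝ) :
    x ⬝ᵥ A *ᵥ y = A *ᵥ x ⬝ᵥ y := by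
  rw [dotProduct_mulVec, ← mulVec_transpose, ← conjTranspose_eq_transpose_of_trivial, hA.eq]

lemma dotProduct_mulVec_conj_of_mulVec_eq_smul {R S : Matrix n n ℝ} (hR : R.IsHermitian)
    {v : n → ℝ} {μ : ℝ} (hv : v ⬝ᵥ v = 1) (hμ : (R * S * R) *ᵥ v = μ • v) :
    R *ᵥ v ⬝ᵥ S *ᵥ R *ᵥ v = μ ∧ S *ᵥ R *ᵥ v ⬝ᵥ (R * R) *ᵥ S *ᵥ R *ᵥ v = μ ^ 2 := by
  have hμ' : R *ᵥ S *ᵥ R *ᵥ v = μ • v := by simpa only [mulVec_mulVec, Matrix.mul_assoc] using hμ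
  constructor
  · rw [← hR.dotProduct_mulVec_comm, hμ', dotProduct_smul, hv, smul_eq_mul, mul_one]
  · rw [← mulVec_mulVec, hR.dotProduct_mulVec_comm, hμ', smul_dotProduct, dotProduct_smul, hv,
      smul_eq_mul, smul_eq_mul]
    ring

variable [DecidableEq n]

namespace Matrix.IsHermitian

lemma eigenvectorBasis_dotProduct_self (hA : A.IsHermitian) (j : n) :
    ⇑(hA.eigenvectorBasis j) ⬝ᵥ ⇑(hA.eigenvectorBasis j) = 1 := by
  have := real_inner_self_eq_norm_sq (hA.eigenvectorBasis j)
  rw [hA.eigenvectorBasis.orthonormal.1 j, EuclideanSpace.inner_eq_star_dotProduct] at this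
  simpa using this

lemma eigenvectorBasis_dotProduct_mulVec (hA : A.IsHermitian) (j : n) (x : n → ℝ) :
    ⇑(hA.eigenvectorBasis j) ⬝ᵥ A *ᵥ x = hA.eigenvalues j * ⇑(hA.eigenvectorBasis j) ⬝ᵥ x := by
  rw [hA.dotProduct_mulVec_comm, hA.mulVec_eigenvectorBasis, smul_dotProduct, smul_eq_mul]

lemma dotProduct_eq_sum_eigenvectorBasis (hA : A.IsHermitian) (x y : n → ℝ) :
    x ⬝ᵥ y = ∑ j, (⇑(hA.eigenvectorBasis j) ⬝ᵥ x) * (⇑(hA.eigenvectorBasis j) ⬝ᵥ y) := by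
  simpa only [EuclideanSpace.inner_eq_star_dotProduct, star_trivial, dotProduct_comm y] using
    (hA.eigenvectorBasis.sum_inner_mul_inner (WithLp.toLp 2 x) (WithLp.toLp 2 y)).symm

lemma dotProduct_mulVec_eq_sum (hA : A.IsHermitian) (x : n → ℝ) :
    x ⬝ᵥ A *ᵥ x = ∑ j, hA.eigenvalues j * (⇑(hA.eigenvectorBasis j) ⬝ᵥ x) ^ 2 := by
  rw [hA.dotProduct_eq_sum_eigenvectorBasis]
  simp_rw [eigenvectorBasis_dotProduct_mulVec]
  exact Finset.sum_congr rfl fun j _ => by ring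

lemma mulVec_dotProduct_mulVec_eq_sum (hA : A.IsHermitian) (x : n → ℝ) :
    A *ᵥ x ⬝ᵥ A *ᵥ x = ∑ j, hA.eigenvalues j ^ 2 * (⇑(hA.eigenvectorBasis j) ⬝ᵥ x) ^ 2 := by
  rw [hA.dotProduct_eq_sum_eigenvectorBasis]
  simp_rw [eigenvectorBasis_dotProduct_mulVec]
  exact Finset.sum_congr rfl fun j _ => by ring

lemma abs_eigenvalues_le_l2_opNorm (hA : A.IsHermitian) (j : n) :
    |hA.eigenvalues j| ≤ ‖A‖ := by
  have h_one : ‖(1 : Matrix n n ℝ)‖ ≤ 1 := by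
    rw [cstar_norm_def, map_one]
    exact ContinuousLinearMap.norm_id_le
  exact (spectrum.norm_le_norm_mul_of_mem (hA.eigenvalues_mem_spectrum_real j)).trans
    (mul_le_of_le_one_right (norm_nonneg A) h_one)

end Matrix.IsHermitian

namespace Matrix.PosSemidef

lemma mul_dotProduct_mulVec_le {η : ℝ} (hA : A.PosSemidef)
    (hη : ∀ j, hA.isHermitian.eigenvalues j ≠ 0 → η ≤ hA.isHermitian.eigenvalues j)
    (x : n → ℝ) : η * (x ⬝ᵥ A *ᵥ x) ≤ A *ᵥ x ⬝ᵥ A *ᵥ x := by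
  rw [hA.isHermitian.dotProduct_mulVec_eq_sum, hA.isHermitian.mulVec_dotProduct_mulVec_eq_sum,
    Finset.mul_sum]
  refine Finset.sum_le_sum fun j _ => ?_
  rcases eq_or_ne (hA.isHermitian.eigenvalues j) 0 with h0 | h0
  · simp [h0]
  · have := mul_le_mul_of_nonneg_left (hη j h0) (hA.eigenvalues_nonneg j)
    nlinarith [sq_nonneg (⇑(hA.isHermitian.eigenvectorBasis j) ⬝ᵥ x)]

lemma mulVec_dotProduct_mulVec_le (hA : A.PosSemidef) (x : n → ℝ) :
    A *ᵥ x ⬝ᵥ A *ᵥ x ≤ ‖A‖ * (x ⬝ᵥ A *ᵥ x) := by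
  rw [hA.isHermitian.dotProduct_mulVec_eq_sum, hA.isHermitian.mulVec_dotProduct_mulVec_eq_sum,
    Finset.mul_sum]
  refine Finset.sum_le_sum fun j _ => ?_
  have hle := (abs_le.mp (hA.isHermitian.abs_eigenvalues_le_l2_opNorm j)).2
  have := mul_le_mul_of_nonneg_left hle (hA.eigenvalues_nonneg j)
  nlinarith [sq_nonneg (⇑(hA.isHermitian.eigenvectorBasis j) ⬝ᵥ x)]

end Matrix.PosSemidef

lemma Matrix.PosDef.dotProduct_le_l2_opNorm_mul_inv (hA : A.PosDef) (y : n → ℝ) :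
    y ⬝ᵥ y ≤ ‖A‖ * (y ⬝ᵥ A⁻¹ *ᵥ y) := by
  have hy : A *ᵥ A⁻¹ *ᵥ y = y := by
    rw [mulVec_mulVec, mul_nonsing_inv A (isUnit_iff_ne_zero.mpr hA.det_pos.ne'), one_mulVec]
  have := hA.posSemidef.mulVec_dotProduct_mulVec_le (A⁻¹ *ᵥ y)
  rwa [hy, dotProduct_comm (A⁻¹ *ᵥ y)] at this

end

theorem stmt3_general (p : ℕ) (Γ Sg R : Matrix (Fin p) (Fin p) ℝ)
    (hΓ : Γ.PosDef) (hSg : Sg.PosSemidef)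
    (hR : R.PosDef) (hRsq : R * R = Γ⁻¹)
    (ηmin : ℝ)
    (hmin : IsLeast {e : ℝ | ∃ i, hSg.isHermitian.eigenvalues i = e ∧ e ≠ 0} ηmin)
    (hM : (R * Sg * R).IsHermitian) :
    ∀ i, hM.eigenvalues i ≠ 0 → ηmin * ‖Γ‖⁻¹ ≤ hM.eigenvalues i := by
  intro i hne
  set μ := hM.eigenvalues i
  set w := R *ᵥ ⇑(hM.eigenvectorBasis i)
  obtain ⟨hμ, hμ_sq⟩ := dotProduct_mulVec_conj_of_mulVec_eq_smul hR.isHermitian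
    (hM.eigenvectorBasis_dotProduct_self i) (hM.mulVec_eigenvectorBasis i)
  have hμ_pos : 0 < μ := (hμ ▸ hSg.dotProduct_mulVec_nonneg w).lt_of_ne' hne
  have hμ_bound : ηmin * μ ≤ ‖Γ‖ * μ ^ 2 :=
    calc ηmin * μ = ηmin * (w ⬝ᵥ Sg *ᵥ w) := by rw [hμ]
      _ ≤ Sg *ᵥ w ⬝ᵥ Sg *ᵥ w :=
        hSg.mul_dotProduct_mulVec_le (fun j hj => hmin.2 ⟨j, rfl, hj⟩) w
      _ ≤ ‖Γ‖ * (Sg *ᵥ w ⬝ᵥ Γ⁻¹ *ᵥ Sg *ᵥ w) := hΓ.dotProduct_le_l2_opNorm_mul_inv _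
      _ = ‖Γ‖ * μ ^ 2 := by rw [← hRsq, hμ_sq]
  rw [← div_eq_mul_inv]
  exact div_le_of_le_mul₀ (norm_nonneg Γ) hμ_pos.le (by nlinarith)

/-- if `Γ` is symmetric positive definite, `Σ` symmetric positive semidefinite
of rank `h` with smallest nonzero eigenvalue `ηmin⁺`, and `R = Γ^{-1/2}` (positive definite
with `R * R = Γ⁻¹`), then every nonzero eigenvalue of `Γ^{-1/2} Σ Γ^{-1/2}` is at least
`ηmin⁺ * ‖Γ‖_op⁻¹`. -/
theorem stmt3 (p h : ℕ) (Γ Sg R : Matrix (Fin p) (Fin p) ℝ)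
    (hΓ : Γ.PosDef) (hSg : Sg.PosSemidef) (hrank : Sg.rank = h)
    (hR : R.PosDef) (hRsq : R * R = Γ⁻¹)
    (ηmin : ℝ) (hηpos : 0 < ηmin)
    (hmin : IsLeast {e : ℝ | ∃ i, hSg.isHermitian.eigenvalues i = e ∧ e ≠ 0} ηmin)
    (hM : (R * Sg * R).IsHermitian) :
    ∀ i, hM.eigenvalues i ≠ 0 → ηmin * ‖Γ‖⁻¹ ≤ hM.eigenvalues i :=
  stmt3_general p Γ Sg R hΓ hSg hR hRsq ηmin hmin hM
end

section
/- Let φ_1 ≥ φ_2 ≥ … ≥ φ_{h₁} > 0 and n < h₁ positive integers. If for some h̃ ∈ {n,…,h₁−1} one has (1/h̃) Σ_{i≤h̃} φ_{h̃}/φ_i + n/h̃ − 1 ≥ 0, then (1/(h̃+1)) Σ_{i≤h̃+1} φ_{h̃+1}/φ_i + n/(h̃+1) − 1 ≤ (1/h̃) Σ_{i≤h̃} φ_{h̃}/φ_i + n/h̃ − 1. -/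
/-!
Write `S m = ∑_{i ≤ m} φ m / φ i`, so that `Υ m = (S m + n) / m - 1`. Passing from `m` to `m + 1`
adds the term `φ (m+1) / φ (m+1) = 1` and can only shrink the others, since `φ (m+1) ≤ φ m`;
hence `Υ (m+1) ≤ (S m + n + 1) / (m + 1) - 1`. Adding `1` to both numerator and denominator of
`(S m + n) / m` does not increase it exactly when that ratio is at least `1`, i.e. when `Υ m ≥ 0`.
-/

open Finset

namespace PhaseTransition

noncomputable def ratioSum (φ : ℕ → ℝ) (m : ℕ) : ℝ :=
  ∑ i ∈ Icc 1 m, φ m / φ i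

/-- The paper's `Υ`. -/
noncomputable def upsilon (φ : ℕ → ℝ) (n m : ℕ) : ℝ :=
  1 / (m : ℝ) * ratioSum φ m + n / m - 1

theorem upsilon_eq (φ : ℕ → ℝ) (n m : ℕ) :
    upsilon φ n m = (ratioSum φ m + n) / m - 1 := by
  rw [upsilon, add_div, one_div_mul_eq_div]

/-- With Lean's `1 / 0 = 0`, `Υ 0 = -1`. -/
theorem pos_of_upsilon_nonneg {φ : ℕ → ℝ} {n m : ℕ} (h : 0 ≤ upsilon φ n m) : 0 < m := by
  refine Nat.pos_of_ne_zero fun hm => ?_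
  norm_num [upsilon, hm] at h

theorem ratioSum_succ_le {φ : ℕ → ℝ} {m : ℕ} (hnonneg : ∀ i ∈ Icc 1 m, 0 ≤ φ i)
    (hle : φ (m + 1) ≤ φ m) : ratioSum φ (m + 1) ≤ ratioSum φ m + 1 := by
  rw [ratioSum, sum_Icc_succ_top (Nat.le_add_left 1 m)]
  exact add_le_add (sum_le_sum fun i hi => div_le_div_of_nonneg_right hle (hnonneg i hi))
    (div_self_le_one _)

theorem add_one_div_add_one_le_div {α : Type*} [Field α] [LinearOrder α] [IsStrictOrderedRing α]
    {a b : α} (hb : 0 < b) (hba : b ≤ a) : (a + 1) / (b + 1) ≤ a / b := by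
  rw [div_le_div_iff₀ (by positivity) hb]
  linarith

theorem upsilon_succ_le {φ : ℕ → ℝ} {n m : ℕ} (hnonneg : ∀ i ∈ Icc 1 m, 0 ≤ φ i)
    (hle : φ (m + 1) ≤ φ m) (h : 0 ≤ upsilon φ n m) :
    upsilon φ n (m + 1) ≤ upsilon φ n m := by
  have hm : (0 : ℝ) < m := by exact_mod_cast pos_of_upsilon_nonneg h
  have hm_le : (m : ℝ) ≤ ratioSum φ m + n := by
    rwa [upsilon_eq, sub_nonneg, le_div_iff₀ hm, one_mul] at h
  rw [upsilon_eq, upsilon_eq, Nat.cast_succ]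
  gcongr ?_ - 1
  calc (ratioSum φ (m + 1) + n) / (m + 1)
      ≤ (ratioSum φ m + n + 1) / (m + 1) := by
        gcongr (?_ : ℝ) / _
        linarith [ratioSum_succ_le hnonneg hle]
    _ ≤ (ratioSum φ m + n) / m := add_one_div_add_one_le_div hm hm_le

end PhaseTransition

open PhaseTransition in
theorem stmt11_general (h₁ n : ℕ)
    (φ : ℕ → ℝ) (hpos : ∀ i, 1 ≤ i → i ≤ h₁ → 0 < φ i)
    (hmono : ∀ i j, 1 ≤ i → i ≤ j → j ≤ h₁ → φ j ≤ φ i)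
    (m : ℕ) (hm2 : m < h₁)
    (hyp : 0 ≤ (1 / (m : ℝ)) * ∑ i ∈ Finset.Icc 1 m, φ m / φ i + (n : ℝ) / m - 1) :
    (1 / ((m : ℝ) + 1)) * ∑ i ∈ Finset.Icc 1 (m + 1), φ (m + 1) / φ i
        + (n : ℝ) / (m + 1) - 1 ≤
      (1 / (m : ℝ)) * ∑ i ∈ Finset.Icc 1 m, φ m / φ i + (n : ℝ) / m - 1 := by
  have hm : 0 < m := pos_of_upsilon_nonneg hyp
  have hnonneg : ∀ i ∈ Icc 1 m, 0 ≤ φ i := fun i hi => by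
    obtain ⟨h1i, him⟩ := mem_Icc.1 hi
    exact (hpos i h1i (by omega)).le
  have hle : φ (m + 1) ≤ φ m := hmono m (m + 1) hm (by omega) hm2
  have hstep := upsilon_succ_le (n := n) hnonneg hle hyp
  rwa [upsilon, Nat.cast_succ] at hstep

/-- Claim 1: for nonincreasing positive `φ_1 ≥ … ≥ φ_{h₁}` and
`n ≤ h̃ < h₁`, if `Υ(h̃) ≥ 0` then `Υ(h̃+1) ≤ Υ(h̃)`, where
`Υ(m) = (1/m) Σ_{i≤m} φ_m/φ_i + n/m − 1`. -/
theorem stmt11 (h₁ n : ℕ) (hn : 0 < n) (hnh : n < h₁)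
    (φ : ℕ → ℝ) (hpos : ∀ i, 1 ≤ i → i ≤ h₁ → 0 < φ i)
    (hmono : ∀ i j, 1 ≤ i → i ≤ j → j ≤ h₁ → φ j ≤ φ i)
    (m : ℕ) (hm1 : n ≤ m) (hm2 : m < h₁)
    (hyp : 0 ≤ (1 / (m : ℝ)) * ∑ i ∈ Finset.Icc 1 m, φ m / φ i + (n : ℝ) / m - 1) :
    (1 / ((m : ℝ) + 1)) * ∑ i ∈ Finset.Icc 1 (m + 1), φ (m + 1) / φ i
        + (n : ℝ) / (m + 1) - 1 ≤
      (1 / (m : ℝ)) * ∑ i ∈ Finset.Icc 1 m, φ m / φ i + (n : ℝ) / m - 1 :=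
  stmt11_general h₁ n φ hpos hmono m hm2 hyp
end

section
/- Let φ_1 ≥ … ≥ φ_{h₁} > 0 with n < h₁ positive integers, and for h̃ ∈ {n,…,h₁} set Υ(h̃) := (1/h̃) Σ_{i≤h̃} φ_{h̃}/φ_i + n/h̃ − 1. There exists a unique integer h₀ ∈ {n,…,h₁} such that for every h̃ ∈ {n,…,h₁}: Υ(h̃) ≥ 0 if and only if h̃ ≤ h₀. -/
/-- there exists a unique integer `h₀ ∈ {n,…,h₁}` such that for every
`h̃ ∈ {n,…,h₁}`, `h̃ ≤ h₀` if and only if `Υ(h̃) ≥ 0`, where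
`Υ(m) = (1/m) Σ_{i≤m} φ_m/φ_i + n/m − 1`. -/
theorem stmt13 (h₁ n : ℕ) (hn : 0 < n) (hnh : n < h₁)
    (φ : ℕ → ℝ) (hpos : ∀ i, 1 ≤ i → i ≤ h₁ → 0 < φ i)
    (hmono : ∀ i j, 1 ≤ i → i ≤ j → j ≤ h₁ → φ j ≤ φ i)
    (Υ : ℕ → ℝ)
    (hΥ : ∀ m, Υ m = (1 / (m : ℝ)) * ∑ i ∈ Finset.Icc 1 m, φ m / φ i + (n : ℝ) / m - 1) :
    ∃! h₀ : ℕ, n ≤ h₀ ∧ h₀ ≤ h₁ ∧ ∀ m, n ≤ m → m ≤ h₁ → (m ≤ h₀ ↔ 0 ≤ Υ m) := by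
  set T : ℕ → ℝ := fun m => ∑ i ∈ Finset.Icc 1 m, φ m / φ i with hTdef
  have hcrit : ∀ m, n ≤ m → (0 ≤ Υ m ↔ (m : ℝ) ≤ T m + n) := by
    intro m hm
    have hm0 : (0 : ℝ) < m := by exact_mod_cast lt_of_lt_of_le hn hm
    rw [hΥ, sub_nonneg, one_div_mul_eq_div, ← add_div, le_div_iff₀ hm0, one_mul]
  have hstep : ∀ m, 1 ≤ m → m + 1 ≤ h₁ → T (m + 1) ≤ T m + 1 := by
    intro m hm hmh
    have hins : Finset.Icc 1 (m + 1) = insert (m + 1) (Finset.Icc 1 m) := by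
      ext x; simp only [Finset.mem_Icc, Finset.mem_insert]; omega
    have hnotmem : m + 1 ∉ Finset.Icc 1 m := by simp
    have hφm1 : 0 < φ (m + 1) := hpos _ (by omega) hmh
    have hself : φ (m + 1) / φ (m + 1) = 1 := div_self (ne_of_gt hφm1)
    have hsum : ∑ i ∈ Finset.Icc 1 m, φ (m + 1) / φ i ≤ T m := by
      apply Finset.sum_le_sum
      intro i hi
      simp only [Finset.mem_Icc] at hi
      have hφi : 0 < φ i := hpos i hi.1 (by omega)
      have h := hmono m (m + 1) hm (by omega) hmh
      gcongr
    calc T (m + 1) = ∑ i ∈ Finset.Icc 1 (m + 1), φ (m + 1) / φ i := rfl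
      _ = φ (m + 1) / φ (m + 1) + ∑ i ∈ Finset.Icc 1 m, φ (m + 1) / φ i := by
          rw [hins, Finset.sum_insert hnotmem]
      _ ≤ T m + 1 := by rw [hself]; linarith
  have hneg : ∀ m, n ≤ m → ∀ k, m ≤ k → k ≤ h₁ → T m + (n : ℝ) < m → T k + n < k := by
    intro m hm k hk
    induction k, hk using Nat.le_induction with
    | base => intro _ h; exact h
    | succ k hk ih =>
      intro hk1 hneg
      have hik := ih (by omega) hneg
      have hs := hstep k (by omega) hk1
      push_cast
      push_cast at hik
      linarith
  set S : Finset ℕ := (Finset.Icc n h₁).filter (fun m => 0 ≤ Υ m) with hSdef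
  have hnS : n ∈ S := by
    have hTn : 0 ≤ T n := by
      apply Finset.sum_nonneg
      intro i hi
      simp only [Finset.mem_Icc] at hi
      exact le_of_lt (div_pos (hpos n hn (by omega)) (hpos i hi.1 (by omega)))
    simp only [hSdef, Finset.mem_filter, Finset.mem_Icc]
    refine ⟨⟨le_rfl, by omega⟩, (hcrit n le_rfl).mpr (by linarith)⟩
  have hSne : S.Nonempty := ⟨n, hnS⟩
  set h₀ := S.max' hSne with hh₀def
  have hh₀S : h₀ ∈ S := S.max'_mem hSne
  have hh₀mem : n ≤ h₀ ∧ h₀ ≤ h₁ ∧ 0 ≤ Υ h₀ := by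
    have := hh₀S
    simp only [hSdef, Finset.mem_filter, Finset.mem_Icc] at this
    exact ⟨this.1.1, this.1.2, this.2⟩
  have hmain : ∀ m, n ≤ m → m ≤ h₁ → (m ≤ h₀ ↔ 0 ≤ Υ m) := by
    intro m hm hmh
    constructor
    · intro hmh₀
      by_contra hc
      push_neg at hc
      have hTm : T m + (n : ℝ) < m := by
        by_contra hc2
        push_neg at hc2
        exact absurd ((hcrit m hm).mpr hc2) (not_le.mpr hc)
      have := hneg m hm h₀ hmh₀ hh₀mem.2.1 hTm
      have h2 := (hcrit h₀ hh₀mem.1).mp hh₀mem.2.2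
      linarith
    · intro h
      apply Finset.le_max'
      simp only [hSdef, Finset.mem_filter, Finset.mem_Icc]
      exact ⟨⟨hm, hmh⟩, h⟩
  refine ⟨h₀, ⟨hh₀mem.1, hh₀mem.2.1, hmain⟩, ?_⟩
  rintro y ⟨hy1, hy2, hy3⟩
  have h1 : h₀ ≤ y := (hy3 h₀ hh₀mem.1 hh₀mem.2.1).mpr hh₀mem.2.2
  have h2 : y ≤ h₀ := (hmain y hy1 hy2).mpr ((hy3 y hy1 hy2).mp le_rfl)
  omega
end

section
/- Let φ_1 ≥ … ≥ φ_h ≥ 0 with φ_i > 0 exactly for i ≤ h₁, and n < h₁ ≤ h positive integers. Let h₀ be the unique index in {n,…,h₁} from the phase-transition lemma. Define x_i = (1 − n/h₀) / ((1/h₀) Σ_{j≤h₀} φ_i/φ_j) for i ≤ h₀ and x_i = 1 for h₀ < i ≤ h. Then x ∈ [0,1]^h, Σ_i x_i = h − n, and x minimizes Σ_{i=1}^h φ_i x_i² over all vectors in [0,1]^h with coordinate sum h − n. -/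
/-!
The problem is a convex quadratic program, so it suffices to exhibit a Karush–Kuhn–Tucker
point. With `S = Σ_{j ≤ h₀} 1/φ_j` and the water level `c = (h₀ - n)/S`, the candidate is
`x_i = c/φ_i` for `i ≤ h₀` and `x_i = 1` beyond: the weighted gradient `φ_i x_i` equals `c`
on the free coordinates and the saturated coordinates have `φ_i ≤ c`. The phase-transition
characterization of `h₀` is exactly what gives `c ≤ φ_{h₀}` (so `x ≤ 1`) and
`φ_{h₀+1} < c` (so the saturated coordinates satisfy the KKT sign condition).
-/

open Finset

lemma Finset.sum_Icc_one_add_sum_Ioc {M : Type*} [AddCommMonoid M] (f : ℕ → M) {a b : ℕ}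
    (hab : a ≤ b) : ∑ i ∈ Icc 1 a, f i + ∑ i ∈ Ioc a b, f i = ∑ i ∈ Icc 1 b, f i := by
  have := sum_Ioc_consecutive f (Nat.zero_le a) hab
  rwa [← Icc_add_one_left_eq_Ioc 0 a, ← Icc_add_one_left_eq_Ioc 0 b, zero_add] at this

lemma two_mul_mul_sub_le_mul_sq_sub {w x y c : ℝ} (hw : 0 ≤ w) (hy : y ≤ 1)
    (hkkt : w * x = c ∨ (x = 1 ∧ w ≤ c)) : 2 * c * (y - x) ≤ w * y ^ 2 - w * x ^ 2 := by
  rcases hkkt with hfree | ⟨rfl, hwc⟩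
  · rw [← hfree]
    nlinarith [mul_nonneg hw (sq_nonneg (y - x))]
  · nlinarith [mul_nonneg hw (sq_nonneg (y - 1)), mul_nonneg (sub_nonneg.2 hwc) (sub_nonneg.2 hy)]

theorem sum_mul_sq_le_of_kkt {ι : Type*} (s : Finset ι) (w x y : ι → ℝ) (c : ℝ)
    (hw : ∀ i ∈ s, 0 ≤ w i) (hy : ∀ i ∈ s, y i ≤ 1) (hsum : ∑ i ∈ s, y i = ∑ i ∈ s, x i)
    (hkkt : ∀ i ∈ s, w i * x i = c ∨ (x i = 1 ∧ w i ≤ c)) :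
    ∑ i ∈ s, w i * x i ^ 2 ≤ ∑ i ∈ s, w i * y i ^ 2 := by
  have hterm := sum_le_sum fun i hi =>
    two_mul_mul_sub_le_mul_sq_sub (hw i hi) (hy i hi) (hkkt i hi)
  rw [← mul_sum, sum_sub_distrib, sum_sub_distrib, hsum, sub_self, mul_zero] at hterm
  linarith

section PhaseTransition

variable {φ : ℕ → ℝ} {n h₀ h₁ : ℕ}

lemma sum_div_eq_mul_sum_inv (φ : ℕ → ℝ) (a m : ℕ) :
    ∑ j ∈ Icc 1 m, φ a / φ j = φ a * ∑ j ∈ Icc 1 m, (φ j)⁻¹ := by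
  simp only [div_eq_mul_inv, mul_sum]

lemma sum_inv_pos {m : ℕ} (hpos : ∀ i, 1 ≤ i → i ≤ m → 0 < φ i) (hm : 1 ≤ m) :
    0 < ∑ j ∈ Icc 1 m, (φ j)⁻¹ :=
  sum_pos (fun j hj => inv_pos.2 (hpos j (mem_Icc.1 hj).1 (mem_Icc.1 hj).2))
    ⟨1, mem_Icc.2 ⟨le_rfl, hm⟩⟩

def IsPhaseIndex (φ : ℕ → ℝ) (n h₁ h₀ : ℕ) : Prop :=
  ∀ m, n < m → m ≤ h₁ →
    (m ≤ h₀ ↔ 1 ≤ (1 / ((m : ℝ) - n)) * ∑ i ∈ Icc 1 m, φ m / φ i)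

lemma one_le_phase_ratio_iff {m : ℕ} (hm : n < m) :
    1 ≤ (1 / ((m : ℝ) - n)) * ∑ i ∈ Icc 1 m, φ m / φ i ↔
      (m : ℝ) - n ≤ φ m * ∑ i ∈ Icc 1 m, (φ i)⁻¹ := by
  rw [sum_div_eq_mul_sum_inv, one_div_mul_eq_div, one_le_div (sub_pos.2 (by exact_mod_cast hm))]

/-- The Lagrange multiplier of the sum constraint. -/
noncomputable def waterLevel (φ : ℕ → ℝ) (n h₀ : ℕ) : ℝ :=
  ((h₀ : ℝ) - n) / ∑ j ∈ Icc 1 h₀, (φ j)⁻¹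

noncomputable def waterFill (φ : ℕ → ℝ) (n h₀ i : ℕ) : ℝ :=
  if i ≤ h₀ then waterLevel φ n h₀ / φ i else 1

lemma ite_eq_waterFill (hh₀ : h₀ ≠ 0) (i : ℕ) :
    (if i ≤ h₀ then
        (1 - (n : ℝ) / h₀) / ((1 / (h₀ : ℝ)) * ∑ j ∈ Icc 1 h₀, φ i / φ j)
      else 1) = waterFill φ n h₀ i := by
  have : (h₀ : ℝ) ≠ 0 := by exact_mod_cast hh₀
  rw [waterFill, waterLevel, sum_div_eq_mul_sum_inv]
  split_ifs
  · field_simp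
  · rfl

lemma IsPhaseIndex.lt (hpos : ∀ i, 1 ≤ i → i ≤ h₁ → 0 < φ i) (hchar : IsPhaseIndex φ n h₁ h₀)
    (hnh : n < h₁) : n < h₀ := by
  have hn1 : 0 < φ (n + 1) := hpos (n + 1) (by omega) hnh
  suffices n + 1 ≤ h₀ by omega
  rw [hchar (n + 1) (by omega) hnh, one_le_phase_ratio_iff (by omega)]
  calc ((n + 1 : ℕ) : ℝ) - n = φ (n + 1) * (φ (n + 1))⁻¹ := by
        rw [mul_inv_cancel₀ hn1.ne']; push_cast; ring
    _ ≤ φ (n + 1) * ∑ i ∈ Icc 1 (n + 1), (φ i)⁻¹ :=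
        mul_le_mul_of_nonneg_left (single_le_sum (f := fun i => (φ i)⁻¹)
          (fun i hi => (inv_pos.2 (hpos i (mem_Icc.1 hi).1 ((mem_Icc.1 hi).2.trans hnh))).le)
          (mem_Icc.2 ⟨by omega, le_rfl⟩)) hn1.le

lemma waterLevel_pos (hpos : ∀ i, 1 ≤ i → i ≤ h₀ → 0 < φ i) (hn : n < h₀) :
    0 < waterLevel φ n h₀ :=
  div_pos (sub_pos.2 (by exact_mod_cast hn)) (sum_inv_pos hpos (by omega))

lemma IsPhaseIndex.waterLevel_le (hpos : ∀ i, 1 ≤ i → i ≤ h₁ → 0 < φ i)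
    (hchar : IsPhaseIndex φ n h₁ h₀) (hn : n < h₀) (hh₀ : h₀ ≤ h₁) :
    waterLevel φ n h₀ ≤ φ h₀ := by
  have hchar₀ := (hchar h₀ hn hh₀).1 le_rfl
  rw [one_le_phase_ratio_iff hn] at hchar₀
  rw [waterLevel, div_le_iff₀ (sum_inv_pos (fun i h1 h2 => hpos i h1 (h2.trans hh₀)) (by omega))]
  exact hchar₀

lemma IsPhaseIndex.lt_waterLevel (hpos : ∀ i, 1 ≤ i → i ≤ h₁ → 0 < φ i)
    (hchar : IsPhaseIndex φ n h₁ h₀) (hn : n < h₀) (hh₀ : h₀ < h₁) :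
    φ (h₀ + 1) < waterLevel φ n h₀ := by
  have hnext := mt (hchar (h₀ + 1) (by omega) hh₀).2 (by omega)
  rw [one_le_phase_ratio_iff (by omega), not_le, sum_Icc_succ_top (by omega), mul_add,
    mul_inv_cancel₀ (hpos (h₀ + 1) (by omega) hh₀).ne'] at hnext
  rw [waterLevel, lt_div_iff₀ (sum_inv_pos (fun i h1 h2 => hpos i h1 (by omega)) (by omega))]
  push_cast at hnext
  linarith

lemma waterFill_mem_Icc {i : ℕ} (hc : 0 < waterLevel φ n h₀)
    (hle : i ≤ h₀ → waterLevel φ n h₀ ≤ φ i) : waterFill φ n h₀ i ∈ Set.Icc 0 1 := by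
  unfold waterFill
  split_ifs with hi
  · have hφ := hc.trans_le (hle hi)
    exact ⟨div_nonneg hc.le hφ.le, (div_le_one hφ).2 (hle hi)⟩
  · exact ⟨zero_le_one, le_rfl⟩

lemma mul_waterFill {i : ℕ} (hi : i ≤ h₀) (hφ : φ i ≠ 0) :
    φ i * waterFill φ n h₀ i = waterLevel φ n h₀ := by
  rw [waterFill, if_pos hi, mul_div_cancel₀ _ hφ]

lemma sum_waterFill {h : ℕ} (hpos : ∀ i, 1 ≤ i → i ≤ h₀ → 0 < φ i) (h₀_pos : 1 ≤ h₀)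
    (hh₀ : h₀ ≤ h) : ∑ i ∈ Icc 1 h, waterFill φ n h₀ i = (h : ℝ) - n := by
  have hfree : ∑ i ∈ Icc 1 h₀, waterFill φ n h₀ i = (h₀ : ℝ) - n := by
    rw [sum_congr rfl fun i hi => by rw [waterFill, if_pos (mem_Icc.1 hi).2, div_eq_mul_inv],
      ← mul_sum, waterLevel, div_mul_cancel₀ _ (sum_inv_pos hpos h₀_pos).ne']
  have hsat : ∑ i ∈ Ioc h₀ h, waterFill φ n h₀ i = (h : ℝ) - h₀ := by
    rw [sum_congr rfl fun i hi => by rw [waterFill, if_neg (not_le.2 (mem_Ioc.1 hi).1)],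
      sum_const, Nat.card_Ioc, nsmul_one, Nat.cast_sub hh₀]
  rw [← sum_Icc_one_add_sum_Ioc _ hh₀, hfree, hsat]
  ring

end PhaseTransition

theorem stmt14_general (h h₁ n : ℕ) (hnh : n < h₁) (hh : h₁ ≤ h)
    (φ : ℕ → ℝ)
    (hmono : ∀ i j, 1 ≤ i → i ≤ j → j ≤ h → φ j ≤ φ i)
    (hsupp : ∀ i, 1 ≤ i → i ≤ h → (0 < φ i ↔ i ≤ h₁))
    (hnonneg : ∀ i, 1 ≤ i → i ≤ h → 0 ≤ φ i)
    (h₀ : ℕ) (hh₀2 : h₀ ≤ h₁)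
    (hchar : ∀ m, n < m → m ≤ h₁ →
      (m ≤ h₀ ↔ 1 ≤ (1 / ((m : ℝ) - n)) * ∑ i ∈ Finset.Icc 1 m, φ m / φ i))
    (x : ℕ → ℝ)
    (hxdef : ∀ i, x i =
      if i ≤ h₀ then
        (1 - (n : ℝ) / h₀) / ((1 / (h₀ : ℝ)) * ∑ j ∈ Finset.Icc 1 h₀, φ i / φ j)
      else 1) :
    (∀ i ∈ Finset.Icc 1 h, x i ∈ Set.Icc (0 : ℝ) 1) ∧
      (∑ i ∈ Finset.Icc 1 h, x i = (h : ℝ) - n) ∧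
      (∀ y : ℕ → ℝ, (∀ i ∈ Finset.Icc 1 h, y i ∈ Set.Icc (0 : ℝ) 1) →
        ∑ i ∈ Finset.Icc 1 h, y i = (h : ℝ) - n →
        ∑ i ∈ Finset.Icc 1 h, φ i * x i ^ 2 ≤ ∑ i ∈ Finset.Icc 1 h, φ i * y i ^ 2) := by
  have hpos : ∀ i, 1 ≤ i → i ≤ h₁ → 0 < φ i := fun i h1 h2 => (hsupp i h1 (h2.trans hh)).2 h2
  have hnh₀ : n < h₀ := IsPhaseIndex.lt hpos hchar hnh
  have hpos₀ : ∀ i, 1 ≤ i → i ≤ h₀ → 0 < φ i := fun i h1 h2 => hpos i h1 (h2.trans hh₀2)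
  have hc_pos := waterLevel_pos hpos₀ hnh₀
  have hc_le : ∀ i, 1 ≤ i → i ≤ h₀ → waterLevel φ n h₀ ≤ φ i := fun i h1 h2 =>
    (IsPhaseIndex.waterLevel_le hpos hchar hnh₀ hh₀2).trans (hmono i h₀ h1 h2 (hh₀2.trans hh))
  have hc_ge : ∀ i, h₀ < i → i ≤ h → φ i ≤ waterLevel φ n h₀ := fun i hi hih => by
    by_cases hih₁ : i ≤ h₁
    · exact (hmono _ _ (by omega) hi hih).trans
        (IsPhaseIndex.lt_waterLevel hpos hchar hnh₀ (by omega)).le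
    · exact (not_lt.1 fun hφ => hih₁ ((hsupp i (by omega) hih).1 hφ)).trans hc_pos.le
  obtain rfl : x = waterFill φ n h₀ :=
    funext fun i => (hxdef i).trans (ite_eq_waterFill (by omega) i)
  have hsum : ∑ i ∈ Icc 1 h, waterFill φ n h₀ i = (h : ℝ) - n :=
    sum_waterFill hpos₀ (by omega) (hh₀2.trans hh)
  refine ⟨fun i hi => waterFill_mem_Icc hc_pos (hc_le i (mem_Icc.1 hi).1), hsum,
    fun y hy hys => ?_⟩
  refine sum_mul_sq_le_of_kkt _ _ _ _ (waterLevel φ n h₀)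
    (fun i hi => hnonneg i (mem_Icc.1 hi).1 (mem_Icc.1 hi).2) (fun i hi => (hy i hi).2)
    (hys.trans hsum.symm) fun i hi => ?_
  obtain ⟨hi1, hih⟩ := mem_Icc.1 hi
  by_cases hi₀ : i ≤ h₀
  · exact .inl (mul_waterFill hi₀ (hpos₀ i hi1 hi₀).ne')
  · exact .inr ⟨if_neg hi₀, hc_ge i (by omega) hih⟩

/-- soft-selection regime: with `φ_1 ≥ … ≥ φ_h ≥ 0` having exactly `h₁`
positive entries, `n < h₁ ≤ h`, and `h₀ ∈ {n,…,h₁}` the phase-transition index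
(characterized by `h̃ ≤ h₀ ⟺ (1/(h̃−n)) Σ_{i≤h̃} φ_{h̃}/φ_i ≥ 1` for `n < h̃ ≤ h₁`),
the vector `x` with `x_i = (1 − n/h₀)/((1/h₀) Σ_{j≤h₀} φ_i/φ_j)` for `i ≤ h₀` and
`x_i = 1` otherwise is feasible (`x ∈ [0,1]^h`, `Σ x_i = h − n`) and minimizes
`Σ φ_i x_i²` over the feasible set. -/
theorem stmt14 (h h₁ n : ℕ) (hn : 0 < n) (hnh : n < h₁) (hh : h₁ ≤ h)
    (φ : ℕ → ℝ)
    (hmono : ∀ i j, 1 ≤ i → i ≤ j → j ≤ h → φ j ≤ φ i)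
    (hsupp : ∀ i, 1 ≤ i → i ≤ h → (0 < φ i ↔ i ≤ h₁))
    (hnonneg : ∀ i, 1 ≤ i → i ≤ h → 0 ≤ φ i)
    (h₀ : ℕ) (hh₀1 : n ≤ h₀) (hh₀2 : h₀ ≤ h₁)
    (hchar : ∀ m, n < m → m ≤ h₁ →
      (m ≤ h₀ ↔ 1 ≤ (1 / ((m : ℝ) - n)) * ∑ i ∈ Finset.Icc 1 m, φ m / φ i))
    (x : ℕ → ℝ)
    (hxdef : ∀ i, x i =
      if i ≤ h₀ then
        (1 - (n : ℝ) / h₀) / ((1 / (h₀ : ℝ)) * ∑ j ∈ Finset.Icc 1 h₀, φ i / φ j)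
      else 1) :
    (∀ i ∈ Finset.Icc 1 h, x i ∈ Set.Icc (0 : ℝ) 1) ∧
      (∑ i ∈ Finset.Icc 1 h, x i = (h : ℝ) - n) ∧
      (∀ y : ℕ → ℝ, (∀ i ∈ Finset.Icc 1 h, y i ∈ Set.Icc (0 : ℝ) 1) →
        ∑ i ∈ Finset.Icc 1 h, y i = (h : ℝ) - n →
        ∑ i ∈ Finset.Icc 1 h, φ i * x i ^ 2 ≤ ∑ i ∈ Finset.Icc 1 h, φ i * y i ^ 2) :=
  stmt14_general h h₁ n hnh hh φ hmono hsupp hnonneg h₀ hh₀2 hchar x hxdef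
end

section
/- Let X ∈ ℝ^{n×p} and Γ ∈ ℝ^{p×p} symmetric positive definite. Then lim_{λ₀→0⁺} (XᵀX + λ₀Γ)⁻¹ Xᵀ y = Γ^{−1/2}(Γ^{−1/2}XᵀXΓ^{−1/2})⁺ Γ^{−1/2} Xᵀ y = Γ⁻¹Xᵀ(XΓ⁻¹Xᵀ)⁺ y for every y ∈ ℝⁿ, where (·)⁺ denotes the Moore–Penrose pseudoinverse. -/
/-!
Put `R = Γ^{-1/2}`, `A = X R` and `M = Aᵀ A = R Xᵀ X R`, so that `XᵀX + λΓ = R⁻¹ (M + λ) R⁻¹`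
and the regularized solution is `R (M + λ)⁻¹ Aᵀ y`.

For positive semidefinite `M`, `c (M + c)⁻¹` is a contraction for `c > 0`. Hence, if `M u = v`
and `M r = u`, the identity `(M + c)⁻¹ v = u - c r + c² (M + c)⁻¹ r` gives `(M + c)⁻¹ v → u`.
For `v = Aᵀ y` this applies with `u = M⁺ v` and `r = M⁺ u`.

The second equality is uniqueness of the Moore–Penrose inverse: `(AᵀA)⁺ Aᵀ` and `Aᵀ (AAᵀ)⁺` are
both pseudoinverses of `A`, and `A Aᵀ = X Γ⁻¹ Xᵀ`.
-/

open Matrix Filter Topology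

/-- `P` is the Moore–Penrose pseudoinverse of `A`. -/
def IsMoorePenrose {m n : ℕ} (A : Matrix (Fin m) (Fin n) ℝ)
    (P : Matrix (Fin n) (Fin m) ℝ) : Prop :=
  A * P * A = A ∧ P * A * P = P ∧ (A * P)ᵀ = A * P ∧ (P * A)ᵀ = P * A

namespace IsMoorePenrose

variable {m n : ℕ} {A : Matrix (Fin m) (Fin n) ℝ} {P P' : Matrix (Fin n) (Fin m) ℝ}

theorem unique (h : IsMoorePenrose A P) (h' : IsMoorePenrose A P') : P = P' := by
  obtain ⟨h₁, h₂, h₃, h₄⟩ := h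
  obtain ⟨h₁', h₂', h₃', h₄'⟩ := h'
  have hAP : A * P = A * P' :=
    calc A * P = (A * P') * (A * P) := by rw [← Matrix.mul_assoc, h₁']
      _ = ((A * P) * (A * P'))ᵀ := by rw [transpose_mul, h₃, h₃']
      _ = A * P' := by rw [← Matrix.mul_assoc, h₁, h₃']
  have hPA : P * A = P' * A :=
    calc P * A = P * (A * P' * A) := by rw [h₁']
      _ = (P * A) * (P' * A) := by simp only [Matrix.mul_assoc]
      _ = ((P' * A) * (P * A))ᵀ := by rw [transpose_mul, h₄, h₄']
      _ = (P' * (A * P * A))ᵀ := by simp only [Matrix.mul_assoc]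
      _ = P' * A := by rw [h₁, h₄']
  calc P = P' * A * P := by rw [← hPA, h₂]
    _ = P' := by rw [Matrix.mul_assoc, hAP, ← Matrix.mul_assoc, h₂']

theorem transpose (h : IsMoorePenrose A P) : IsMoorePenrose Aᵀ Pᵀ := by
  obtain ⟨h₁, h₂, h₃, h₄⟩ := h
  refine ⟨?_, ?_, ?_, ?_⟩
  · rw [← transpose_mul, ← transpose_mul, ← Matrix.mul_assoc, h₁]
  · rw [← transpose_mul, ← transpose_mul, ← Matrix.mul_assoc, h₂]
  · rw [← transpose_mul, transpose_transpose, h₄]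
  · rw [← transpose_mul, transpose_transpose, h₃]

theorem transpose_mul_mul (h : IsMoorePenrose A P) : Aᵀ * A * P = Aᵀ := by
  rw [Matrix.mul_assoc, ← h.2.2.1, ← transpose_mul, h.1]

theorem transpose_eq_self {M P : Matrix (Fin n) (Fin n) ℝ} (hM : Mᵀ = M)
    (h : IsMoorePenrose M P) : Pᵀ = P :=
  (hM ▸ h.transpose).unique h

theorem mul_comm {M P : Matrix (Fin n) (Fin n) ℝ} (hM : Mᵀ = M) (h : IsMoorePenrose M P) :
    M * P = P * M := by
  rw [← h.2.2.2, transpose_mul, hM, h.transpose_eq_self hM]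

theorem mul_mul_self {M P : Matrix (Fin n) (Fin n) ℝ} (hM : Mᵀ = M) (h : IsMoorePenrose M P) :
    M * P * P = P := by
  rw [h.mul_comm hM, h.2.1]

theorem of_transpose_mul_self {P : Matrix (Fin n) (Fin n) ℝ} (h : IsMoorePenrose (Aᵀ * A) P) :
    IsMoorePenrose A (P * Aᵀ) := by
  have hPT : Pᵀ = P := h.transpose_eq_self (by simp)
  -- `D := A - A (P Aᵀ) A` satisfies `Dᵀ D = 0`, hence `D = 0`.
  have hAD : Aᵀ * (A - A * (P * Aᵀ) * A) = 0 := by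
    rw [Matrix.mul_sub, sub_eq_zero]
    simpa only [Matrix.mul_assoc] using h.1.symm
  have hD : (A - A * (P * Aᵀ) * A)ᵀ * (A - A * (P * Aᵀ) * A) = 0 := by
    have hDT : (A - A * (P * Aᵀ) * A)ᵀ = (1 - Aᵀ * (P * Aᵀ)ᵀ) * Aᵀ := by
      simp only [transpose_sub, transpose_mul, transpose_transpose, Matrix.sub_mul, Matrix.one_mul,
        Matrix.mul_assoc]
    rw [hDT, Matrix.mul_assoc, hAD, Matrix.mul_zero]
  refine ⟨(sub_eq_zero.mp (conjTranspose_mul_self_eq_zero.mp hD)).symm, ?_, ?_, ?_⟩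
  · simpa only [Matrix.mul_assoc] using congrArg (· * Aᵀ) h.2.1
  · simp only [transpose_mul, transpose_transpose, hPT, Matrix.mul_assoc]
  · simpa only [Matrix.mul_assoc] using h.2.2.2

theorem of_mul_transpose_self {Q : Matrix (Fin m) (Fin m) ℝ} (h : IsMoorePenrose (A * Aᵀ) Q) :
    IsMoorePenrose A (Aᵀ * Q) := by
  have h' : IsMoorePenrose (Aᵀᵀ * Aᵀ) Q := by rwa [transpose_transpose]
  simpa [h.transpose_eq_self (by simp)] using h'.of_transpose_mul_self.transpose

end IsMoorePenrose

section Regularization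

variable {ι : Type*} [Fintype ι]

theorem norm_le_sqrt_dotProduct_self (x : ι → ℝ) : ‖x‖ ≤ √(x ⬝ᵥ x) := by
  refine (pi_norm_le_iff_of_nonneg (Real.sqrt_nonneg _)).mpr fun i => ?_
  rw [Real.norm_eq_abs, ← Real.sqrt_mul_self_eq_abs]
  exact Real.sqrt_le_sqrt <|
    Finset.single_le_sum (f := fun j => x j * x j) (fun j _ => mul_self_nonneg _) (Finset.mem_univ i)

variable [DecidableEq ι] {M : Matrix ι ι ℝ}

namespace Matrix.PosSemidef

theorem isUnit_add_smul_one (hM : M.PosSemidef) {c : ℝ} (hc : 0 < c) : IsUnit (M + c • 1) :=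
  (PosDef.posSemidef_add hM (PosDef.one.smul hc)).isUnit

theorem sq_mul_dotProduct_self_le (hM : M.PosSemidef) {c : ℝ} (hc : 0 ≤ c) (x : ι → ℝ) :
    c ^ 2 * (x ⬝ᵥ x) ≤ ((M + c • 1) *ᵥ x) ⬝ᵥ ((M + c • 1) *ᵥ x) := by
  have hMx : 0 ≤ x ⬝ᵥ (M *ᵥ x) := by simpa using hM.dotProduct_mulVec_nonneg x
  have hMxMx : 0 ≤ (M *ᵥ x) ⬝ᵥ (M *ᵥ x) := Finset.sum_nonneg fun i _ => mul_self_nonneg _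
  have hexpand : ((M + c • 1) *ᵥ x) ⬝ᵥ ((M + c • 1) *ᵥ x) =
      (M *ᵥ x) ⬝ᵥ (M *ᵥ x) + 2 * c * (x ⬝ᵥ (M *ᵥ x)) + c ^ 2 * (x ⬝ᵥ x) := by
    simp only [add_mulVec, smul_mulVec, one_mulVec, add_dotProduct, dotProduct_add,
      smul_dotProduct, dotProduct_smul, smul_eq_mul, dotProduct_comm (M *ᵥ x) x]
    ring
  nlinarith

theorem norm_smul_inv_add_smul_one_mulVec_le (hM : M.PosSemidef) {c : ℝ} (hc : 0 < c)
    (r : ι → ℝ) : ‖c • ((M + c • 1)⁻¹ *ᵥ r)‖ ≤ √(r ⬝ᵥ r) := by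
  set g := (M + c • 1)⁻¹ *ᵥ r
  have hg : (M + c • 1) *ᵥ g = r := by
    rw [mulVec_mulVec, mul_nonsing_inv _ ((isUnit_iff_isUnit_det _).mp (hM.isUnit_add_smul_one hc)),
      one_mulVec]
  calc ‖c • g‖ ≤ √((c • g) ⬝ᵥ (c • g)) := norm_le_sqrt_dotProduct_self _
    _ = √(c ^ 2 * (g ⬝ᵥ g)) := by
      rw [smul_dotProduct, dotProduct_smul, smul_eq_mul, smul_eq_mul, ← mul_assoc, sq]
    _ ≤ √(r ⬝ᵥ r) := Real.sqrt_le_sqrt (hg ▸ hM.sq_mul_dotProduct_self_le hc.le g)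

theorem inv_add_smul_one_mulVec_eq (hM : M.PosSemidef) {u v r : ι → ℝ}
    (hu : M *ᵥ u = v) (hr : M *ᵥ r = u) {c : ℝ} (hc : 0 < c) :
    (M + c • 1)⁻¹ *ᵥ v = u - c • r + c • c • ((M + c • 1)⁻¹ *ᵥ r) := by
  have := (hM.isUnit_add_smul_one hc).invertible
  refine inv_mulVec_eq_vec ?_
  simp only [mulVec_add, mulVec_sub, mulVec_smul, mulVec_mulVec, mul_inv_of_invertible,
    one_mulVec, add_mulVec, smul_mulVec, hu, hr]
  module

theorem tendsto_inv_add_smul_one_mulVec (hM : M.PosSemidef) {u v r : ι → ℝ}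
    (hu : M *ᵥ u = v) (hr : M *ᵥ r = u) :
    Tendsto (fun c : ℝ => (M + c • 1)⁻¹ *ᵥ v) (𝓝[>] 0) (𝓝 u) := by
  have hlin : Tendsto (fun c : ℝ => u - c • r) (𝓝[>] 0) (𝓝 u) := by
    have : Continuous fun c : ℝ => u - c • r := by fun_prop
    simpa using (this.tendsto 0).mono_left nhdsWithin_le_nhds
  have hbound : Tendsto (fun c : ℝ => c * √(r ⬝ᵥ r)) (𝓝[>] 0) (𝓝 0) := by
    have : Continuous fun c : ℝ => c * √(r ⬝ᵥ r) := by fun_prop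
    simpa using (this.tendsto 0).mono_left nhdsWithin_le_nhds
  have hsmall : Tendsto (fun c : ℝ => c • c • ((M + c • 1)⁻¹ *ᵥ r)) (𝓝[>] 0) (𝓝 0) := by
    refine squeeze_zero_norm' ?_ hbound
    filter_upwards [self_mem_nhdsWithin] with c (hc : 0 < c)
    rw [norm_smul, Real.norm_of_nonneg hc.le]
    exact mul_le_mul_of_nonneg_left (hM.norm_smul_inv_add_smul_one_mulVec_le hc r) hc.le
  refine ((add_zero u) ▸ hlin.add hsmall).congr' ?_
  filter_upwards [self_mem_nhdsWithin] with c (hc : 0 < c)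
  exact (hM.inv_add_smul_one_mulVec_eq hu hr hc).symm

end Matrix.PosSemidef

end Regularization

theorem IsMoorePenrose.tendsto_inv_transpose_mul_self_add_smul_one_mulVec {m n : ℕ}
    {A : Matrix (Fin m) (Fin n) ℝ} {P : Matrix (Fin n) (Fin n) ℝ}
    (hP : IsMoorePenrose (Aᵀ * A) P) (y : Fin m → ℝ) :
    Tendsto (fun c : ℝ => (Aᵀ * A + c • 1)⁻¹ *ᵥ (Aᵀ *ᵥ y)) (𝓝[>] 0) (𝓝 (P *ᵥ (Aᵀ *ᵥ y))) := by
  have hA : (Aᵀ * A).PosSemidef := posSemidef_conjTranspose_mul_self A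
  refine hA.tendsto_inv_add_smul_one_mulVec (r := P *ᵥ (P *ᵥ (Aᵀ *ᵥ y))) ?_ ?_
  · rw [mulVec_mulVec, mulVec_mulVec, Matrix.mul_assoc _ P,
      hP.of_transpose_mul_self.transpose_mul_mul]
  · rw [mulVec_mulVec, mulVec_mulVec, hP.mul_mul_self (by simp)]

theorem inv_transpose_mul_self_add_smul_eq_of_mul_self_eq_inv {n p : ℕ}
    (X : Matrix (Fin n) (Fin p) ℝ) {Γ R : Matrix (Fin p) (Fin p) ℝ} (hR : IsUnit R.det)
    (hRsq : R * R = Γ⁻¹) (c : ℝ) :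
    (Xᵀ * X + c • Γ)⁻¹ = R * (R * Xᵀ * X * R + c • 1)⁻¹ * R := by
  have hΓ : Γ = R⁻¹ * R⁻¹ := by
    have hΓinv : IsUnit Γ⁻¹.det := hRsq ▸ (det_mul R R).symm ▸ hR.mul hR
    rw [← nonsing_inv_nonsing_inv Γ (isUnit_nonsing_inv_det_iff.mp hΓinv), ← hRsq,
      Matrix.mul_inv_rev]
  have hsplit : Xᵀ * X + c • Γ = R⁻¹ * (R * Xᵀ * X * R + c • 1) * R⁻¹ := by
    simp only [hΓ, Matrix.mul_add, Matrix.add_mul, Matrix.mul_smul, Matrix.smul_mul,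
      Matrix.mul_one, Matrix.mul_assoc, nonsing_inv_mul_cancel_left R _ hR, mul_nonsing_inv R hR]
  rw [hsplit, Matrix.mul_inv_rev, Matrix.mul_inv_rev, nonsing_inv_nonsing_inv R hR,
    ← Matrix.mul_assoc]

theorem stmt18_general (n p : ℕ) (X : Matrix (Fin n) (Fin p) ℝ) (Γ R : Matrix (Fin p) (Fin p) ℝ)
    (hR : R.PosDef) (hRsq : R * R = Γ⁻¹)
    (P : Matrix (Fin p) (Fin p) ℝ) (hP : IsMoorePenrose (R * Xᵀ * X * R) P)
    (Q : Matrix (Fin n) (Fin n) ℝ) (hQ : IsMoorePenrose (X * Γ⁻¹ * Xᵀ) Q)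
    (y : Fin n → ℝ) :
    Filter.Tendsto (fun lam : ℝ => (Xᵀ * X + lam • Γ)⁻¹ *ᵥ (Xᵀ *ᵥ y))
        (nhdsWithin 0 (Set.Ioi 0)) (nhds (R *ᵥ (P *ᵥ (R *ᵥ (Xᵀ *ᵥ y))))) ∧
      R *ᵥ (P *ᵥ (R *ᵥ (Xᵀ *ᵥ y))) = Γ⁻¹ *ᵥ (Xᵀ *ᵥ (Q *ᵥ y)) := by
  have hRT : Rᵀ = R := hR.isHermitian
  have hAT : (X * R)ᵀ = R * Xᵀ := by rw [transpose_mul, hRT]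
  have hM : R * Xᵀ * X * R = (X * R)ᵀ * (X * R) := by rw [hAT]; simp only [Matrix.mul_assoc]
  have hv : R *ᵥ (Xᵀ *ᵥ y) = (X * R)ᵀ *ᵥ y := by rw [hAT, mulVec_mulVec]
  have hG : X * Γ⁻¹ * Xᵀ = (X * R) * (X * R)ᵀ := by
    rw [← hRsq, hAT]; simp only [Matrix.mul_assoc]
  rw [hM] at hP
  rw [hG] at hQ
  rw [hv]
  constructor
  · refine (((show Continuous (R *ᵥ ·) by fun_prop).tendsto _).comp
      (hP.tendsto_inv_transpose_mul_self_add_smul_one_mulVec y)).congr' ?_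
    filter_upwards with c
    rw [Function.comp_apply, inv_transpose_mul_self_add_smul_eq_of_mul_self_eq_inv X
      ((isUnit_iff_isUnit_det R).mp hR.isUnit) hRsq c, hM, ← mulVec_mulVec, ← mulVec_mulVec, hv]
  · have hPQ : P * (X * R)ᵀ = (X * R)ᵀ * Q :=
      hP.of_transpose_mul_self.unique hQ.of_mul_transpose_self
    rw [hAT] at hPQ
    simp only [mulVec_mulVec, hAT, hPQ, ← hRsq, Matrix.mul_assoc]

/-- for `Γ` symmetric positive definite with inverse square root `R`
(`R` positive definite, `R * R = Γ⁻¹`),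
`lim_{λ₀→0⁺} (XᵀX + λ₀Γ)⁻¹ Xᵀ y = Γ^{-1/2}(Γ^{-1/2}XᵀXΓ^{-1/2})⁺Γ^{-1/2}Xᵀ y
= Γ⁻¹Xᵀ(XΓ⁻¹Xᵀ)⁺ y` for every `y`, where `(·)⁺` is the Moore–Penrose pseudoinverse. -/
theorem stmt18 (n p : ℕ) (X : Matrix (Fin n) (Fin p) ℝ) (Γ R : Matrix (Fin p) (Fin p) ℝ)
    (hΓ : Γ.PosDef) (hR : R.PosDef) (hRsq : R * R = Γ⁻¹)
    (P : Matrix (Fin p) (Fin p) ℝ) (hP : IsMoorePenrose (R * Xᵀ * X * R) P)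
    (Q : Matrix (Fin n) (Fin n) ℝ) (hQ : IsMoorePenrose (X * Γ⁻¹ * Xᵀ) Q)
    (y : Fin n → ℝ) :
    Filter.Tendsto (fun lam : ℝ => (Xᵀ * X + lam • Γ)⁻¹ *ᵥ (Xᵀ *ᵥ y))
        (nhdsWithin 0 (Set.Ioi 0)) (nhds (R *ᵥ (P *ᵥ (R *ᵥ (Xᵀ *ᵥ y))))) ∧
      R *ᵥ (P *ᵥ (R *ᵥ (Xᵀ *ᵥ y))) = Γ⁻¹ *ᵥ (Xᵀ *ᵥ (Q *ᵥ y)) :=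
  stmt18_general n p X Γ R hR hRsq P hP Q hQ y
end
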